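/- With summariseExpr as above, there exists a function rebuild : ESummary → Expr such that for every expression e (with all binders distinct), rebuild (summariseExpr e) is alpha-equivalent to e. -/
import Mathlib


/-- Untyped lambda expressions with named variables (names are natural numbers). -/
inductive Expr : Type
  | var : ℕ → Expr
  | lam : ℕ → Expr → Expr
  | app : Expr → Expr → Expr
deriving DecidableEq

/-- Number of nodes of an expression. -/
def Expr.size : Expr → ℕ
  | .var _ => 1
  | .lam _ e => 1 + e.size
  | .app a b => 1 + a.size + b.size

/-- All variable names occurring (free or bound) in an expression. -/
def Expr.allVars : Expr → Finset ℕ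
  | .var v => {v}
  | .lam x e => insert x e.allVars
  | .app a b => a.allVars ∪ b.allVars

/-- Rename the free occurrences of `x` to `y`. -/
def Expr.rename (x y : ℕ) : Expr → Expr
  | .var v => if v = x then .var y else .var v
  | .lam v e => if v = x then .lam v e else .lam v (e.rename x y)
  | .app a b => .app (a.rename x y) (b.rename x y)

/-- Alpha-equivalence: the least congruence identifying `lam x e` with
`lam y (rename x y e)` whenever `y` does not occur in `e`. -/
inductive Aeq : Expr → Expr → Prop
  | refl (e : Expr) : Aeq e e
  | symm {a b : Expr} : Aeq a b → Aeq b a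
  | trans {a b c : Expr} : Aeq a b → Aeq b c → Aeq a c
  | lamCong {a b : Expr} (x : ℕ) : Aeq a b → Aeq (.lam x a) (.lam x b)
  | appCong {a₁ b₁ a₂ b₂ : Expr} :
      Aeq a₁ b₁ → Aeq a₂ b₂ → Aeq (.app a₁ a₂) (.app b₁ b₂)
  | alpha (x y : ℕ) (e : Expr) (hy : y ∉ e.allVars) :
      Aeq (.lam x e) (.lam y (e.rename x y))

/-- The binders of an expression, in order. -/
def Expr.binders : Expr → List ℕ
  | .var _ => []
  | .lam x e => x :: e.binders
  | .app a b => a.binders ++ b.binders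

/-- Every binding site binds a distinct variable name. -/
def Expr.UniqueBinders (e : Expr) : Prop := e.binders.Nodup

/-- Position trees: the set of positions of the occurrences of one variable. -/
inductive PosTree : Type
  | here : PosTree
  | leftOnly : PosTree → PosTree
  | rightOnly : PosTree → PosTree
  | both : PosTree → PosTree → PosTree
deriving DecidableEq

/-- The structure (shape) of an expression: variables are anonymous, and each
lambda stores the position tree of the occurrences of its bound variable
(`none` if the bound variable is unused). -/
inductive Structure : Type
  | svar : Structure
  | slam : Option PosTree → Structure → Structure
  | sapp : Structure → Structure → Structure
deriving DecidableEq

/-- A variable map: a map from names to position trees (modelled as a function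
into `Option PosTree`; the domain is the set of names mapped to `some _`). -/
abbrev VarMap : Type := ℕ → Option PosTree

/-- An e-summary: a structure together with a free-variable map. -/
abbrev ESummary : Type := Structure × VarMap

/-- Merge the variable maps of the two children of an application node,
combining position trees with `leftOnly` / `rightOnly` / `both`. -/
def mergeVM (m₁ m₂ : VarMap) : VarMap := fun v =>
  match m₁ v, m₂ v with
  | some p, some q => some (.both p q)
  | some p, none   => some (.leftOnly p)
  | none,   some q => some (.rightOnly q)
  | none,   none   => none

/-- Compute the e-summary of an expression. -/
def summariseExpr : Expr → ESummary
  | .var v => (.svar, fun u => if u = v then some .here else none)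
  | .lam x e =>
      let r := summariseExpr e
      (.slam (r.2 x) r.1, fun u => if u = x then none else r.2 u)
  | .app a b =>
      let r₁ := summariseExpr a
      let r₂ := summariseExpr b
      (.sapp r₁.1 r₂.1, mergeVM r₁.2 r₂.2)


lemma Expr.binders_rename (e : Expr) (x y : ℕ) : (e.rename x y).binders = e.binders := by
  induction e with
  | var v => simp only [Expr.rename]; split <;> rfl
  | lam v e ih =>
      simp only [Expr.rename]; split
      · rfl
      · simp [Expr.binders, ih]
  | app a b iha ihb => simp [Expr.rename, Expr.binders, iha, ihb]

lemma Expr.size_rename (e : Expr) (x y : ℕ) : (e.rename x y).size = e.size := by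
  induction e with
  | var v => simp only [Expr.rename]; split <;> rfl
  | lam v e ih =>
      simp only [Expr.rename]; split
      · rfl
      · simp [Expr.size, ih]
  | app a b iha ihb => simp [Expr.rename, Expr.size, iha, ihb]

lemma Expr.size_pos (e : Expr) : 0 < e.size := by
  cases e <;> simp [Expr.size]

lemma summarise_notMem (e : Expr) (v : ℕ) (hv : v ∉ e.allVars) :
    (summariseExpr e).2 v = none := by
  induction e with
  | var u =>
      simp only [Expr.allVars, Finset.mem_singleton] at hv
      simp [summariseExpr, hv]
  | lam x e ih =>
      simp only [Expr.allVars, Finset.mem_insert, not_or] at hv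
      simp [summariseExpr, hv.1, ih hv.2]
  | app a b iha ihb =>
      simp only [Expr.allVars, Finset.mem_union, not_or] at hv
      simp [summariseExpr, mergeVM, iha hv.1, ihb hv.2]

lemma summarise_rename (e : Expr) (x y : ℕ) (hy : y ∉ e.allVars) (hxy : x ≠ y) :
    summariseExpr (e.rename x y) = ((summariseExpr e).1,
      fun u => if u = y then (summariseExpr e).2 x
        else if u = x then none else (summariseExpr e).2 u) := by
  induction e with
  | var v =>
      simp only [Expr.allVars, Finset.mem_singleton] at hy
      simp only [Expr.rename]
      split
      · subst v
        refine Prod.ext rfl (funext fun u => ?_)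
        simp only [summariseExpr]
        by_cases h1 : u = y <;> by_cases h2 : u = x <;> simp_all
      · refine Prod.ext rfl (funext fun u => ?_)
        rename_i hvx
        have hvx' : x ≠ v := fun h => hvx h.symm
        simp only [summariseExpr]
        by_cases h1 : u = y <;> by_cases h2 : u = x <;> by_cases h3 : u = v <;> simp_all
  | lam v e ih =>
      simp only [Expr.allVars, Finset.mem_insert, not_or] at hy
      simp only [Expr.rename]
      split
      · subst v
        refine Prod.ext rfl (funext fun u => ?_)
        simp only [summariseExpr]
        by_cases h1 : u = y <;> by_cases h2 : u = x <;>
          simp_all [summarise_notMem e y hy.2]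
      · rename_i hvx
        rw [summariseExpr]
        rw [ih hy.2]
        refine Prod.ext ?_ (funext fun u => ?_)
        · simp only [summariseExpr]
          have h1 : v ≠ y := fun h => hy.1 h.symm
          simp [h1, hvx]
        · simp only [summariseExpr]
          have h1 : v ≠ y := fun h => hy.1 h.symm
          have hvx' : x ≠ v := fun h => hvx h.symm
          by_cases h2 : u = y <;> by_cases h3 : u = x <;> by_cases h4 : u = v <;>
            simp_all
  | app a b iha ihb =>
      simp only [Expr.allVars, Finset.mem_union, not_or] at hy
      simp only [Expr.rename]
      rw [summariseExpr, iha hy.1, ihb hy.2]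
      refine Prod.ext rfl (funext fun u => ?_)
      simp only [summariseExpr, mergeVM]
      by_cases h1 : u = y <;> by_cases h2 : u = x <;> simp_all

lemma mergeVM_inj {m₁ m₂ m₁' m₂' : VarMap} (h : mergeVM m₁ m₂ = mergeVM m₁' m₂') :
    m₁ = m₁' ∧ m₂ = m₂' := by
  constructor <;> funext v <;> have hv := congrFun h v <;>
    simp only [mergeVM] at hv <;>
    rcases h1 : m₁ v with _ | p <;> rcases h2 : m₂ v with _ | q <;>
    rcases h3 : m₁' v with _ | p' <;> rcases h4 : m₂' v with _ | q' <;>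
    simp_all

lemma summarise_inj : ∀ n e₁ e₂, e₁.size ≤ n →
    summariseExpr e₁ = summariseExpr e₂ →
    e₁.UniqueBinders → e₂.UniqueBinders → Aeq e₁ e₂ := by
  intro n
  induction n with
  | zero => intro e₁ _ h; exact absurd (lt_of_lt_of_le e₁.size_pos h) (lt_irrefl 0)
  | succ n ih =>
    intro e₁ e₂ hsz hsum hu₁ hu₂
    cases e₁ with
    | var v₁ =>
      cases e₂ with
      | var v₂ =>
        have hm := congrArg Prod.snd hsum
        have hv := congrFun hm v₁
        simp only [summariseExpr] at hv
        by_cases h : v₁ = v₂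
        · subst h; exact Aeq.refl _
        · simp [h] at hv
      | lam x₂ e₂ => simp [summariseExpr] at hsum
      | app a₂ b₂ => simp [summariseExpr] at hsum
    | lam x₁ e₁ =>
      cases e₂ with
      | var v₂ => simp [summariseExpr] at hsum
      | lam x₂ e₂ =>
        have hs := congrArg Prod.fst hsum
        have hm := congrArg Prod.snd hsum
        simp only [summariseExpr, Structure.slam.injEq] at hs
        simp only [summariseExpr] at hm
        obtain ⟨hann, hstr⟩ := hs
        -- choose a fresh variable z
        obtain ⟨z, hz⟩ := Infinite.exists_notMem_finset
          (e₁.allVars ∪ e₂.allVars ∪ {x₁, x₂})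
        simp only [Finset.mem_union, Finset.mem_insert, Finset.mem_singleton,
          not_or] at hz
        obtain ⟨⟨hz₁, hz₂⟩, hzx₁, hzx₂⟩ := hz
        have hx₁z : x₁ ≠ z := fun h => hzx₁ h.symm
        have hx₂z : x₂ ≠ z := fun h => hzx₂ h.symm
        have key : Aeq (e₁.rename x₁ z) (e₂.rename x₂ z) := by
          apply ih
          · have : e₁.size ≤ n := by
              simp only [Expr.size] at hsz; omega
            rw [Expr.size_rename]; exact this
          · rw [summarise_rename e₁ x₁ z hz₁ hx₁z,
              summarise_rename e₂ x₂ z hz₂ hx₂z]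
            refine Prod.ext hstr (funext fun u => ?_)
            by_cases h1 : u = z
            · simp [h1, hann]
            · simp only [if_neg h1]
              exact congrFun hm u
          · have := hu₁
            simp only [Expr.UniqueBinders, Expr.binders, List.nodup_cons] at this
            simpa [Expr.UniqueBinders, Expr.binders_rename] using this.2
          · have := hu₂
            simp only [Expr.UniqueBinders, Expr.binders, List.nodup_cons] at this
            simpa [Expr.UniqueBinders, Expr.binders_rename] using this.2
        exact Aeq.trans (Aeq.alpha x₁ z e₁ hz₁)
          (Aeq.trans (Aeq.lamCong z key) (Aeq.symm (Aeq.alpha x₂ z e₂ hz₂)))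
      | app a₂ b₂ => simp [summariseExpr] at hsum
    | app a₁ b₁ =>
      cases e₂ with
      | var v₂ => simp [summariseExpr] at hsum
      | lam x₂ e₂ => simp [summariseExpr] at hsum
      | app a₂ b₂ =>
        have hs := congrArg Prod.fst hsum
        have hm := congrArg Prod.snd hsum
        simp only [summariseExpr, Structure.sapp.injEq] at hs
        simp only [summariseExpr] at hm
        obtain ⟨hma, hmb⟩ := mergeVM_inj hm
        simp only [Expr.UniqueBinders, Expr.binders, List.nodup_append] at hu₁ hu₂
        simp only [Expr.size] at hsz
        exact Aeq.appCong
          (ih a₁ a₂ (by omega) (Prod.ext hs.1 hma) hu₁.1 hu₂.1)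
          (ih b₁ b₂ (by omega) (Prod.ext hs.2 hmb) hu₁.2.1 hu₂.2.1)

/-- The e-summary loses no information beyond bound-variable names: there exists a
function `rebuild` such that for every expression `e` with all binders distinct,
`rebuild (summariseExpr e)` is alpha-equivalent to `e`. -/
theorem exists_rebuild :
    ∃ rebuild : ESummary → Expr,
      ∀ e : Expr, e.UniqueBinders → Aeq (rebuild (summariseExpr e)) e := by
  classical
  refine ⟨fun s => if h : ∃ e : Expr, summariseExpr e = s ∧ e.UniqueBinders
    then h.choose else .var 0, fun e hu => ?_⟩
  have hex : ∃ e' : Expr, summariseExpr e' = summariseExpr e ∧ e'.UniqueBinders :=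
    ⟨e, rfl, hu⟩
  simp only [dif_pos hex]
  exact summarise_inj hex.choose.size _ _ le_rfl hex.choose_spec.1 hex.choose_spec.2 hu
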